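/- Let A = (a_{ij}) be a 2×2 real matrix with det A > 0 and tr A < 0, let d > 0, and set D = diag(1, d) and B(λ) = D⁻¹(λI − A) for λ ∈ ℝ. Assume a₂₂ + d·a₁₁ > 2√(d · det A), and let λ_c > 0 be the bifurcation value at which the discriminant Δ(λ) := (tr B(λ))² − 4 det B(λ) first vanishes, so that Δ(λ) > 0 for 0 ≤ λ < λ_c and Δ(λ_c) = 0. Define β₋(λ) = (tr B(λ) − √Δ(λ))/2 and β₊(λ) = (tr B(λ) + √Δ(λ))/2 for λ ∈ [0, λ_c). Then β₋ is strictly increasing and β₊ is strictly decreasing on [0, λ_c): for all 0 ≤ λ < μ < λ_c, β₋(λ) < β₋(μ) and β₊(λ) > β₊(μ). -/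

import Mathlib

/-!
With `u(λ) = (1 - d) λ + d a₁₁ - a₂₂` and `P = -a₁₂ a₂₁` one has `d² Δ(λ) = u(λ)² - 4 d P`, while
`tr B(λ)` is affine with slope `(1 + d) / d > 0`. Both claims therefore follow from
`√Δ(λ) - √Δ(μ) > tr B(μ) - tr B(λ)`: `√Δ` falls faster than `tr B` rises.
As `λ_c` is the first zero of `Δ`, `u(λ)² > u(λ_c)² = 4 d P` on `[0, λ_c)`, so the affine `u` moves
towards `0`, which forces `(d - 1) u > 0`; convexity of `u²` and the hypotheses at `λ = 0` give
`u² < (1 + d)² P`. Together these yield the pointwise slope bound `(1 + d) d √Δ < (d - 1) u`, and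
factoring `Δ(λ) - Δ(μ)` as a difference of squares turns it into the chord inequality.
-/

/-- `B(λ) = D⁻¹ (λ I − A)` with `D = diag (1, d)`. -/
noncomputable def Bmat (A : Matrix (Fin 2) (Fin 2) ℝ) (d lam : ℝ) :
    Matrix (Fin 2) (Fin 2) ℝ :=
  (Matrix.diagonal ![1, d])⁻¹ * (lam • (1 : Matrix (Fin 2) (Fin 2) ℝ) - A)

/-- The discriminant `Δ(λ) = (tr B(λ))² − 4 det B(λ)`. -/
noncomputable def discB (A : Matrix (Fin 2) (Fin 2) ℝ) (d lam : ℝ) : ℝ :=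
  (Bmat A d lam).trace ^ 2 - 4 * (Bmat A d lam).det

/-- The smaller eigenvalue `β₋(λ) = (tr B(λ) − √Δ(λ))/2`. -/
noncomputable def betaMinus (A : Matrix (Fin 2) (Fin 2) ℝ) (d lam : ℝ) : ℝ :=
  ((Bmat A d lam).trace - Real.sqrt (discB A d lam)) / 2

/-- The larger eigenvalue `β₊(λ) = (tr B(λ) + √Δ(λ))/2`. -/
noncomputable def betaPlus (A : Matrix (Fin 2) (Fin 2) ℝ) (d lam : ℝ) : ℝ :=
  ((Bmat A d lam).trace + Real.sqrt (discB A d lam)) / 2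

theorem Bmat_eq (A : Matrix (Fin 2) (Fin 2) ℝ) {d : ℝ} (hd : d ≠ 0) (lam : ℝ) :
    Bmat A d lam = !![lam - A 0 0, -A 0 1; -A 1 0 / d, (lam - A 1 1) / d] := by
  have hunit : IsUnit ![(1 : ℝ), d] := Pi.isUnit_iff.2 fun i => by fin_cases i <;> simp [hd]
  rw [Bmat, Matrix.inv_diagonal, Ring.inverse_of_isUnit hunit]
  ext i j
  fin_cases i <;> fin_cases j <;> simp [Matrix.mul_apply, Matrix.one_apply, div_eq_inv_mul]

theorem Bmat_trace (A : Matrix (Fin 2) (Fin 2) ℝ) {d : ℝ} (hd : d ≠ 0) (lam : ℝ) :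
    (Bmat A d lam).trace = (lam - A 0 0) + (lam - A 1 1) / d := by
  simp [Bmat_eq A hd, Matrix.trace_fin_two]

theorem Bmat_trace_sub (A : Matrix (Fin 2) (Fin 2) ℝ) {d : ℝ} (hd : d ≠ 0) (lam mu : ℝ) :
    (Bmat A d mu).trace - (Bmat A d lam).trace = (1 + d) * (mu - lam) / d := by
  rw [Bmat_trace A hd, Bmat_trace A hd]
  field_simp
  ring

theorem sq_mul_discB (A : Matrix (Fin 2) (Fin 2) ℝ) {d : ℝ} (hd : d ≠ 0) (lam : ℝ) :
    d ^ 2 * discB A d lam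
      = ((1 - d) * lam + (d * A 0 0 - A 1 1)) ^ 2 - 4 * d * -(A 0 1 * A 1 0) := by
  rw [discB, Bmat_eq A hd, Matrix.trace_fin_two, Matrix.det_fin_two]
  simp only [Matrix.of_apply, Matrix.cons_val', Matrix.cons_val_zero, Matrix.cons_val_fin_one,
    Matrix.cons_val_one]
  field_simp
  ring

theorem sq_sub_lt_of_det_pos {a b c e d : ℝ} (hdet : 0 < a * e - b * c) (htr : a + e < 0)
    (hd : 0 < d) (hs : 0 < e + d * a) : (d * a - e) ^ 2 < (1 + d) ^ 2 * -(b * c) := by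
  have hq : 0 < e + d ^ 2 * a := by nlinarith
  calc (d * a - e) ^ 2 = (a + e) * (e + d ^ 2 * a) + (1 + d) ^ 2 * -(a * e) := by ring
    _ < (1 + d) ^ 2 * -(a * e) := by linarith [mul_neg_of_neg_of_pos htr hq]
    _ < (1 + d) ^ 2 * -(b * c) := mul_lt_mul_of_pos_left (by linarith) (by positivity)

theorem sq_lt_of_affine {u : ℝ → ℝ} {m M t x : ℝ} (hu : ∀ y, u y = u 0 + m * y)
    (hx₀ : 0 ≤ x) (hxt : x < t) (h₀ : u 0 ^ 2 < M) (ht : u t ^ 2 ≤ M) : u x ^ 2 < M := by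
  rw [hu] at ht ⊢
  -- convexity of the square along the segment from `0` to `t`, with denominators cleared
  have key : t ^ 2 * (M - (u 0 + m * x) ^ 2)
      = t * (t - x) * (M - u 0 ^ 2) + t * x * (M - (u 0 + m * t) ^ 2)
        + x * (t - x) * (m * t) ^ 2 := by ring
  have hpos : 0 < t ^ 2 * (M - (u 0 + m * x) ^ 2) := by
    have := hx₀.trans_lt hxt
    have := sub_pos.2 hxt
    have := sub_pos.2 h₀
    have := sub_nonneg.2 ht
    rw [key]
    positivity
  linarith [pos_of_mul_pos_right hpos (sq_nonneg t)]

theorem mul_neg_of_sq_add_lt_sq {x y : ℝ} (h : (x + y) ^ 2 < x ^ 2) : x * y < 0 := by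
  nlinarith [sq_nonneg y]

section SlopeComparison

variable {u : ℝ → ℝ} {d P t : ℝ}

theorem one_add_mul_sqrt_lt (hu : ∀ y, u y = u 0 + (1 - d) * y) (hd : 0 < d)
    (h₀ : u 0 ^ 2 < (1 + d) ^ 2 * P) (ht : u t ^ 2 = 4 * d * P)
    {x : ℝ} (hx₀ : 0 ≤ x) (hxt : x < t) (hx : 4 * d * P < u x ^ 2) :
    (1 + d) * √(u x ^ 2 - 4 * d * P) < (d - 1) * u x := by
  have hsign : 0 < (d - 1) * u x := by
    have hut : u x + (1 - d) * (t - x) = u t := by rw [hu x, hu t]; ring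
    have := mul_neg_of_sq_add_lt_sq (hut ▸ ht ▸ hx)
    nlinarith [sub_pos.2 hxt]
  have hP : 0 ≤ P := by nlinarith [sq_nonneg (u t)]
  have hbound : u x ^ 2 < (1 + d) ^ 2 * P :=
    sq_lt_of_affine hu hx₀ hxt h₀ (by nlinarith [sq_nonneg (1 - d)])
  refine lt_of_pow_lt_pow_left₀ 2 hsign.le ?_
  rw [mul_pow, Real.sq_sqrt (by linarith)]
  nlinarith

theorem one_add_mul_sub_lt_sqrt_sub_sqrt (hu : ∀ y, u y = u 0 + (1 - d) * y) (hd : 0 < d)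
    (h₀ : u 0 ^ 2 < (1 + d) ^ 2 * P) (ht : u t ^ 2 = 4 * d * P)
    (hpos : ∀ x, 0 ≤ x → x < t → 4 * d * P < u x ^ 2)
    {lam mu : ℝ} (hlam : 0 ≤ lam) (hlm : lam < mu) (hmt : mu < t) :
    (1 + d) * (mu - lam) < √(u lam ^ 2 - 4 * d * P) - √(u mu ^ 2 - 4 * d * P) := by
  have hmu : 0 ≤ mu := hlam.trans hlm.le
  have hlt : lam < t := hlm.trans hmt
  set σl := √(u lam ^ 2 - 4 * d * P)
  set σm := √(u mu ^ 2 - 4 * d * P)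
  have hl := one_add_mul_sqrt_lt hu hd h₀ ht hlam hlt (hpos lam hlam hlt)
  have hm := one_add_mul_sqrt_lt hu hd h₀ ht hmu hmt (hpos mu hmu hmt)
  have hσl : 0 < σl := Real.sqrt_pos.2 (sub_pos.2 (hpos lam hlam hlt))
  have hσm : 0 ≤ σm := Real.sqrt_nonneg _
  have hdiff : σl ^ 2 - σm ^ 2 = (mu - lam) * ((d - 1) * u lam + (d - 1) * u mu) := by
    rw [Real.sq_sqrt (sub_pos.2 (hpos lam hlam hlt)).le,
      Real.sq_sqrt (sub_pos.2 (hpos mu hmu hmt)).le, hu lam, hu mu]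
    ring
  refine lt_of_mul_lt_mul_right (a := σl + σm) ?_ (by positivity)
  calc (1 + d) * (mu - lam) * (σl + σm) = (mu - lam) * ((1 + d) * σl + (1 + d) * σm) := by ring
    _ < (mu - lam) * ((d - 1) * u lam + (d - 1) * u mu) := by gcongr
    _ = (σl - σm) * (σl + σm) := by linear_combination -hdiff

end SlopeComparison

theorem stmt17_general (A : Matrix (Fin 2) (Fin 2) ℝ) (hdet : 0 < A.det) (htr : A.trace < 0)
    (d : ℝ) (hd : 0 < d)
    (hcond : 2 * Real.sqrt (d * A.det) < A 1 1 + d * A 0 0)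
    (lamc : ℝ)
    (hpos : ∀ lam : ℝ, 0 ≤ lam → lam < lamc → 0 < discB A d lam)
    (hzero : discB A d lamc = 0) :
    ∀ lam mu : ℝ, 0 ≤ lam → lam < mu → mu < lamc →
      betaMinus A d lam < betaMinus A d mu ∧ betaPlus A d mu < betaPlus A d lam := by
  intro lam mu hlam hlm hmu
  set u : ℝ → ℝ := fun x => (1 - d) * x + (d * A 0 0 - A 1 1)
  set P := -(A 0 1 * A 1 0)
  have hdisc : ∀ x, d ^ 2 * discB A d x = u x ^ 2 - 4 * d * P := sq_mul_discB A hd.ne'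
  have hsqrt : ∀ x, √(u x ^ 2 - 4 * d * P) = d * √(discB A d x) := fun x => by
    rw [← hdisc, Real.sqrt_mul (sq_nonneg d), Real.sqrt_sq hd.le]
  have h₀ : u 0 ^ 2 < (1 + d) ^ 2 * P := by
    rw [show u 0 = d * A 0 0 - A 1 1 by simp [u]]
    exact sq_sub_lt_of_det_pos (by rwa [Matrix.det_fin_two] at hdet)
      (by rwa [Matrix.trace_fin_two] at htr) hd
      ((by positivity : (0 : ℝ) ≤ 2 * √(d * A.det)).trans_lt hcond)
  have ht : u lamc ^ 2 = 4 * d * P := by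
    have := hdisc lamc
    rw [hzero, mul_zero] at this
    linarith
  have hpos' : ∀ x, 0 ≤ x → x < lamc → 4 * d * P < u x ^ 2 := fun x hx₀ hxt => by
    linarith [hdisc x, mul_pos (pow_pos hd 2) (hpos x hx₀ hxt)]
  have hgap := one_add_mul_sub_lt_sqrt_sub_sqrt (fun y => by simp only [u]; ring) hd h₀ ht hpos'
    hlam hlm hmu
  rw [hsqrt, hsqrt, ← mul_sub, ← div_lt_iff₀' hd, ← Bmat_trace_sub A hd.ne'] at hgap
  have hT₀ : 0 < (Bmat A d mu).trace - (Bmat A d lam).trace := by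
    rw [Bmat_trace_sub A hd.ne']
    have := sub_pos.2 hlm
    positivity
  simp only [betaMinus, betaPlus]
  constructor <;> linarith

/-- Let `A` be a `2 × 2` real matrix with `det A > 0`, `tr A < 0`, `d > 0`,
and `a₂₂ + d a₁₁ > 2 √(d det A)`. Let `λ_c > 0` be the bifurcation value at which the
discriminant `Δ(λ) = (tr B(λ))² − 4 det B(λ)` first vanishes, so `Δ(λ) > 0` for
`0 ≤ λ < λ_c` and `Δ(λ_c) = 0`. Then `β₋` is strictly increasing and `β₊` is strictly
decreasing on `[0, λ_c)`. -/
theorem stmt17 (A : Matrix (Fin 2) (Fin 2) ℝ) (hdet : 0 < A.det) (htr : A.trace < 0)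
    (d : ℝ) (hd : 0 < d)
    (hcond : 2 * Real.sqrt (d * A.det) < A 1 1 + d * A 0 0)
    (lamc : ℝ) (hlamc : 0 < lamc)
    (hpos : ∀ lam : ℝ, 0 ≤ lam → lam < lamc → 0 < discB A d lam)
    (hzero : discB A d lamc = 0) :
    ∀ lam mu : ℝ, 0 ≤ lam → lam < mu → mu < lamc →
      betaMinus A d lam < betaMinus A d mu ∧ betaPlus A d mu < betaPlus A d lam :=
  stmt17_general A hdet htr d hd hcond lamc hpos hzero
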